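/- arXiv:1808.03808 — 3 statements merged into one kernel-verified Lean document; each statement's English description precedes it below -/
import Mathlib

section
/- Define the Peirce symbol 𝔇(T;a,b,p) on complete binary trees by 𝔇(leaf;a,b,p) = 0 and 𝔇(T1∘T2;a,b,p) = p·(𝔇(T1;a,b,p)+𝔇(T2;a,b,p)) + ρ(T1,a)ρ(T2,b) + ρ(T1,b)ρ(T2,a). Then for every tree T, (p−a)·𝔇(T;a,1/2,p) = ρ(T,p) − ρ(T,a). -/
/-!
At `b = 1/2` every tree has `ρ(T, b) = 1`, so the recursion for `𝔇(T; a, b, p)` reduces to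
`𝔇(T₁ ∘ T₂) = p (𝔇(T₁) + 𝔇(T₂)) + ρ(T₁, a) + ρ(T₂, a)`. Multiplied by `p - a`, this is the
recursion satisfied by `ρ(T, p) - ρ(T, a)`, and both sides vanish at a leaf.
-/

inductive BTree : Type
  | leaf : BTree
  | node : BTree → BTree → BTree

def BTree.rho {R : Type*} [CommSemiring R] (q : R) : BTree → R
  | .leaf => 1
  | .node l r => q * (l.rho q + r.rho q)

def BTree.leaves : BTree → ℕ
  | .leaf => 1
  | .node l r => l.leaves + r.leaves


/-- The Peirce symbol of a tree. -/
def BTree.psym {R : Type*} [CommSemiring R] (a b p : R) : BTree → R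
  | .leaf => 0
  | .node l r => p * (l.psym a b p + r.psym a b p)
      + l.rho a * r.rho b + l.rho b * r.rho a

namespace BTree

theorem rho_eq_one_of_two_mul_eq_one {R : Type*} [CommSemiring R] {b : R} (hb : 2 * b = 1)
    (T : BTree) : T.rho b = 1 := by
  induction T with
  | leaf => rfl
  | node l r hl hr => rw [rho, hl, hr, one_add_one_eq_two, mul_comm, hb]

theorem sub_mul_psym_of_two_mul_eq_one {R : Type*} [CommRing R] {b : R} (hb : 2 * b = 1)
    (T : BTree) (a p : R) : (p - a) * T.psym a b p = T.rho p - T.rho a := by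
  induction T with
  | leaf => simp [psym, rho]
  | node l r hl hr =>
    simp only [psym, rho, rho_eq_one_of_two_mul_eq_one hb]
    linear_combination p * hl + p * hr

end BTree

theorem psym_at_half (F : Type*) [Field F] (h2 : (2 : F) ≠ 0)
    (T : BTree) (a p : F) :
    (p - a) * T.psym a ((2 : F)⁻¹) p = T.rho p - T.rho a :=
  T.sub_mul_psym_of_two_mul_eq_one (mul_inv_cancel₀ h2) a p
end

section
/- For plenary power trees S_{n+1} (S_1 = leaf, S_{k+1} = S_k ∘ S_k) and the Peirce symbol 𝔇 defined recursively by 𝔇(leaf;a,b,p)=0 and 𝔇(T1∘T2;a,b,p)=p(𝔇(T1)+𝔇(T2))+ρ(T1,a)ρ(T2,b)+ρ(T1,b)ρ(T2,a), there holds (p−2ab)·𝔇(S_{n+1};a,b,p) = 2^n·(p^n − (2ab)^n) for all n ≥ 0. -/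
def plen : ℕ → BTree
  | 0 => .leaf
  | n + 1 => .node (plen n) (plen n)

/-!
Since `ρ(S_{n+1}, q) = (2q)^n`, the recursion for the Peirce symbol of `S_{n+2} = S_{n+1} ∘ S_{n+1}`
reads `𝔇_{n+1} = 2p 𝔇_n + 2^{n+1} (2ab)^n`. Unrolling it, `𝔇_n = 2^n ∑_{i<n} p^i (2ab)^{n-1-i}` is
`2^n` times a homogeneous geometric sum in `p` and `2ab`, and multiplying by `p - 2ab` telescopes it
to `p^n - (2ab)^n`.
-/

open Finset

section CommSemiring

variable {R : Type*} [CommSemiring R]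

lemma rho_plen (q : R) (n : ℕ) : (plen n).rho q = (2 * q) ^ n := by
  induction n with
  | zero => rw [plen, BTree.rho, pow_zero]
  | succ n ih => rw [plen, BTree.rho, ih, pow_succ]; ring

lemma psym_plen_succ (a b p : R) (n : ℕ) :
    (plen (n + 1)).psym a b p = 2 * p * (plen n).psym a b p + 2 ^ (n + 1) * (2 * a * b) ^ n := by
  rw [plen, BTree.psym, rho_plen, rho_plen]
  ring

lemma psym_plen_eq_geom_sum₂ (a b p : R) (n : ℕ) :
    (plen n).psym a b p = 2 ^ n * ∑ i ∈ range n, p ^ i * (2 * a * b) ^ (n - 1 - i) := by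
  induction n with
  | zero => rw [plen, BTree.psym, sum_range_zero, mul_zero]
  | succ n ih =>
    rw [psym_plen_succ, ih, sum_range_succ', pow_zero, one_mul, Nat.add_sub_cancel, Nat.sub_zero]
    have shift (i : ℕ) : n - 1 - i = n - (i + 1) := by omega
    simp only [shift, pow_succ, mul_add, mul_sum]
    congr 1
    exact sum_congr rfl fun i _ => by ring

end CommSemiring

theorem psym_plenary (R : Type*) [CommRing R] (a b p : R) (n : ℕ) :
    (p - 2 * a * b) * (plen n).psym a b p = 2 ^ n * (p ^ n - (2 * a * b) ^ n) := by
  rw [psym_plen_eq_geom_sum₂, mul_left_comm, (Commute.all _ _).mul_geom_sum₂]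
end

section
/- Let A be a commutative nonassociative algebra over a field F of characteristic ≠ 2,3 satisfying the Jordan-type identity x·x^3 = x^2·x^2 for all x ∈ A (principal powers). Let c be a nonzero idempotent and suppose y ∈ A satisfies c·y = λy with y not a scalar multiple of c and (the span of c and y has dimension 2, A torsion-free). Then λ(2λ−1)(λ−1) = 0, i.e., λ ∈ {0, 1/2, 1}. -/
/-!
Differentiating `x·(x·(x·x)) = (x·x)·(x·x)` at `c` in the direction `y` gives an identity linear
in `y`; at an idempotent `c` with `c·y = y·c = λ y` it reads `(λ + λ² + 2λ³ - 4λ²) y = 0`.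
-/

section Linearization

variable {F A : Type*} [Field F] [AddCommGroup A] [Module F A] (mul : A →ₗ[F] A →ₗ[F] A)

theorem linearized_jordan_identity (h2 : (2 : F) ≠ 0) (h3 : (3 : F) ≠ 0)
    (hJordan : ∀ x : A, mul x (mul x (mul x x)) = mul (mul x x) (mul x x)) (x y : A) :
    mul y (mul x (mul x x)) + mul x (mul y (mul x x)) + mul x (mul x (mul y x)) +
        mul x (mul x (mul x y)) =
      mul (mul y x + mul x y) (mul x x) + mul (mul x x) (mul y x + mul x y) := by
  have h12 : (12 : F) ≠ 0 := by
    have : (12 : F) = 2 * 2 * 3 := by norm_num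
    rw [this]
    exact mul_ne_zero (mul_ne_zero h2 h2) h3
  -- For the quartic `f t := (x + t y)·(x + t y)³ - (x + t y)²·(x + t y)²` with linear
  -- coefficient `a₁`, the combination `8 (f 1 - f (-1)) - (f 2 - f (-2))` equals `12 a₁`.
  have hp1 := hJordan (x + y)
  have hm1 := hJordan (x - y)
  have hp2 := hJordan (x + (2 : F) • y)
  have hm2 := hJordan (x - (2 : F) • y)
  simp only [map_add, map_sub, LinearMap.add_apply, LinearMap.sub_apply, map_smul,
    LinearMap.smul_apply] at hp1 hm1 hp2 hm2 ⊢
  refine smul_right_injective A h12 ?_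
  linear_combination (norm := module) (8 : F) • hp1 - (8 : F) • hm1 - hp2 + hm2

theorem peirce_eigenvalue_smul_eq_zero (h2 : (2 : F) ≠ 0) (h3 : (3 : F) ≠ 0)
    (hJordan : ∀ x : A, mul x (mul x (mul x x)) = mul (mul x x) (mul x x))
    {c y : A} {lam : F} (hc : mul c c = c) (hcy : mul c y = lam • y) (hyc : mul y c = lam • y) :
    (lam * (2 * lam - 1) * (lam - 1)) • y = 0 := by
  have hlin := linearized_jordan_identity mul h2 h3 hJordan c y
  simp only [hc, hcy, hyc, map_add, map_smul, LinearMap.add_apply, LinearMap.smul_apply,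
    smul_smul] at hlin
  linear_combination (norm := module) hlin

end Linearization

theorem jordan_identity_peirce_spectrum_general
    (F : Type*) [Field F] (h2 : (2 : F) ≠ 0) (h3 : (3 : F) ≠ 0)
    (A : Type*) [AddCommGroup A] [Module F A]
    (mul : A →ₗ[F] A →ₗ[F] A) (hcomm : ∀ x y : A, mul x y = mul y x)
    (hJordan : ∀ x : A, mul x (mul x (mul x x)) = mul (mul x x) (mul x x))
    (c : A) (hc : mul c c = c)
    (y : A) (lam : F) (hy : mul c y = lam • y)
    (hind : LinearIndependent F ![c, y]) :
    lam * (2 * lam - 1) * (lam - 1) = 0 := by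
  have hy0 : y ≠ 0 := by simpa using hind.ne_zero 1
  have hyc : mul y c = lam • y := hcomm y c ▸ hy
  exact (smul_eq_zero.mp
    (peirce_eigenvalue_smul_eq_zero mul h2 h3 hJordan hc hy hyc)).resolve_right hy0

/-- In a commutative algebra satisfying the Jordan-type identity `x·x³ = x²·x²`,
the eigenvalue of an idempotent on an eigenvector independent of it satisfies
`λ(2λ−1)(λ−1) = 0`. -/
theorem jordan_identity_peirce_spectrum
    (F : Type*) [Field F] (h2 : (2 : F) ≠ 0) (h3 : (3 : F) ≠ 0)
    (A : Type*) [AddCommGroup A] [Module F A]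
    (mul : A →ₗ[F] A →ₗ[F] A) (hcomm : ∀ x y : A, mul x y = mul y x)
    (hJordan : ∀ x : A, mul x (mul x (mul x x)) = mul (mul x x) (mul x x))
    (c : A) (hc : mul c c = c) (hc0 : c ≠ 0)
    (y : A) (lam : F) (hy : mul c y = lam • y)
    (hind : LinearIndependent F ![c, y]) :
    lam * (2 * lam - 1) * (lam - 1) = 0 :=
  jordan_identity_peirce_spectrum_general F h2 h3 A mul hcomm hJordan c hc y lam hy hind
end
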